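/- For all n ≥ 1, the partitions of [n] avoiding both 1/2/3 and 13/2 are exactly the partitions of the form {1,...,k}/{k+1,...,n} for some k ∈ [n] (interpreting k = n as the single block [n]); hence there are exactly n such partitions. -/
import Mathlib


open Finset

structure SetPartition (n : ℕ) where
  blocks : Finset (Finset ℕ)
  nonempty_mem : ∀ B ∈ blocks, B.Nonempty
  disj : ∀ B ∈ blocks, ∀ C ∈ blocks, B ≠ C → Disjoint B C
  cover : blocks.sup id = Finset.Icc 1 n

/-- `σ` contains the pattern `π`: there is an order-preserving choice of elements
and an injective assignment of blocks of `π` to distinct blocks of `σ`. -/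
def SetPartition.Contains {n k : ℕ} (σ : SetPartition n) (π : SetPartition k) : Prop :=
  ∃ f : ℕ → ℕ, StrictMonoOn f (Finset.Icc 1 k : Set ℕ) ∧
    ∃ g : Finset ℕ → Finset ℕ,
      (∀ B ∈ π.blocks, g B ∈ σ.blocks) ∧
      (∀ B ∈ π.blocks, ∀ C ∈ π.blocks, g B = g C → B = C) ∧
      (∀ B ∈ π.blocks, ∀ x ∈ B, f x ∈ g B)

def SetPartition.Avoids {n k : ℕ} (σ : SetPartition n) (π : SetPartition k) : Prop :=
  ¬ σ.Contains π

def pat1_2_3 : SetPartition 3 := ⟨{{1}, {2}, {3}}, by decide, by decide, by decide⟩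
def pat1_23 : SetPartition 3 := ⟨{{1}, {2, 3}}, by decide, by decide, by decide⟩
def pat12_3 : SetPartition 3 := ⟨{{1, 2}, {3}}, by decide, by decide, by decide⟩
def pat13_2 : SetPartition 3 := ⟨{{1, 3}, {2}}, by decide, by decide, by decide⟩
def pat123 : SetPartition 3 := ⟨{{1, 2, 3}}, by decide, by decide, by decide⟩

lemma SetPartition.ext' {n : ℕ} {σ τ : SetPartition n} (h : σ.blocks = τ.blocks) : σ = τ := by
  cases σ; cases τ; simp_all

lemma mk123 {n : ℕ} (σ : SetPartition n) {a b c : ℕ} {B C D : Finset ℕ}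
    (hab : a < b) (hbc : b < c) (hB : B ∈ σ.blocks) (hC : C ∈ σ.blocks) (hD : D ∈ σ.blocks)
    (hBC : B ≠ C) (hBD : B ≠ D) (hCD : C ≠ D)
    (ha : a ∈ B) (hb : b ∈ C) (hc : c ∈ D) : σ.Contains pat1_2_3 := by
  refine ⟨fun x => if x = 1 then a else if x = 2 then b else c, ?_,
    fun S => if S = {1} then B else if S = {2} then C else D, ?_, ?_, ?_⟩
  · intro x hx y hy hxy
    simp only [Finset.coe_Icc, Set.mem_Icc] at hx hy
    obtain ⟨hx1, hx2⟩ := hx; obtain ⟨hy1, hy2⟩ := hy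
    interval_cases x <;> interval_cases y <;> simp <;> omega
  · intro S hS
    simp only [pat1_2_3, Finset.mem_insert, Finset.mem_singleton] at hS
    rcases hS with rfl | rfl | rfl <;> simp [hB, hC, hD]
  · intro S hS T hT
    simp only [pat1_2_3, Finset.mem_insert, Finset.mem_singleton] at hS hT
    have h12 : ({1} : Finset ℕ) ≠ {2} := by decide
    have h13 : ({1} : Finset ℕ) ≠ {3} := by decide
    have h23 : ({2} : Finset ℕ) ≠ {3} := by decide
    rcases hS with rfl | rfl | rfl <;> rcases hT with rfl | rfl | rfl <;>
      simp_all <;> tauto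
  · intro S hS x hx
    simp only [pat1_2_3, Finset.mem_insert, Finset.mem_singleton] at hS
    rcases hS with rfl | rfl | rfl <;> simp_all

lemma mk13_2 {n : ℕ} (σ : SetPartition n) {a b c : ℕ} {B C : Finset ℕ}
    (hab : a < b) (hbc : b < c) (hB : B ∈ σ.blocks) (hC : C ∈ σ.blocks)
    (hBC : B ≠ C) (ha : a ∈ B) (hb : b ∈ C) (hc : c ∈ B) : σ.Contains pat13_2 := by
  refine ⟨fun x => if x = 1 then a else if x = 2 then b else c, ?_,
    fun S => if S = ({1, 3} : Finset ℕ) then B else C, ?_, ?_, ?_⟩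
  · intro x hx y hy hxy
    simp only [Finset.coe_Icc, Set.mem_Icc] at hx hy
    obtain ⟨hx1, hx2⟩ := hx; obtain ⟨hy1, hy2⟩ := hy
    interval_cases x <;> interval_cases y <;> simp <;> omega
  · intro S hS
    have h21 : ({2} : Finset ℕ) ≠ {1, 3} := by decide
    simp only [pat13_2, Finset.mem_insert, Finset.mem_singleton] at hS
    rcases hS with rfl | rfl <;> simp [hB, hC, h21]
  · intro S hS T hT
    have h21 : ({2} : Finset ℕ) ≠ {1, 3} := by decide
    simp only [pat13_2, Finset.mem_insert, Finset.mem_singleton] at hS hT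
    rcases hS with rfl | rfl <;> rcases hT with rfl | rfl <;>
      simp_all [h21, hBC, hBC.symm]
  · intro S hS x hx
    have h21 : ({2} : Finset ℕ) ≠ {1, 3} := by decide
    simp only [pat13_2, Finset.mem_insert, Finset.mem_singleton] at hS
    rcases hS with rfl | rfl
    · simp only [if_pos rfl]
      simp only [Finset.mem_insert, Finset.mem_singleton] at hx
      rcases hx with rfl | rfl <;> simp [ha, hc]
    · simp only [Finset.mem_singleton] at hx
      subst hx
      simp [h21, hb]

lemma contains123 {n : ℕ} (σ : SetPartition n) {B C D : Finset ℕ}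
    (hB : B ∈ σ.blocks) (hC : C ∈ σ.blocks) (hD : D ∈ σ.blocks)
    (hBC : B ≠ C) (hBD : B ≠ D) (hCD : C ≠ D) : σ.Contains pat1_2_3 := by
  obtain ⟨a, ha⟩ := σ.nonempty_mem B hB
  obtain ⟨b, hb⟩ := σ.nonempty_mem C hC
  obtain ⟨c, hc⟩ := σ.nonempty_mem D hD
  have hab : a ≠ b := fun h => Finset.disjoint_left.mp (σ.disj B hB C hC hBC) ha (h ▸ hb)
  have hac : a ≠ c := fun h => Finset.disjoint_left.mp (σ.disj B hB D hD hBD) ha (h ▸ hc)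
  have hbc : b ≠ c := fun h => Finset.disjoint_left.mp (σ.disj C hC D hD hCD) hb (h ▸ hc)
  rcases Nat.lt_trichotomy a b with h1 | rfl | h1
  · rcases Nat.lt_trichotomy b c with h2 | rfl | h2
    · exact mk123 σ h1 h2 hB hC hD hBC hBD hCD ha hb hc
    · exact absurd rfl hbc
    · rcases Nat.lt_trichotomy a c with h3 | rfl | h3
      · exact mk123 σ h3 h2 hB hD hC hBD hBC hCD.symm ha hc hb
      · exact absurd rfl hac
      · exact mk123 σ h3 h1 hD hB hC hBD.symm hCD.symm hBC hc ha hb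
  · exact absurd rfl hab
  · rcases Nat.lt_trichotomy a c with h2 | rfl | h2
    · exact mk123 σ h1 h2 hC hB hD hBC.symm hCD hBD hb ha hc
    · exact absurd rfl hac
    · rcases Nat.lt_trichotomy b c with h3 | rfl | h3
      · exact mk123 σ h3 h2 hC hD hB hCD hBC.symm hBD.symm hb hc ha
      · exact absurd rfl hbc
      · exact mk123 σ h3 h1 hD hC hB hCD.symm hBD.symm hBC.symm hc hb ha

lemma avoids123_of_card_le_two {n : ℕ} (σ : SetPartition n) (h : σ.blocks.card ≤ 2) :
    σ.Avoids pat1_2_3 := by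
  rintro ⟨f, hf, g, hg1, hg2, hg3⟩
  have m1 : ({1} : Finset ℕ) ∈ pat1_2_3.blocks := by decide
  have m2 : ({2} : Finset ℕ) ∈ pat1_2_3.blocks := by decide
  have m3 : ({3} : Finset ℕ) ∈ pat1_2_3.blocks := by decide
  have d12 : g {1} ≠ g {2} := fun h => by have := hg2 _ m1 _ m2 h; simp at this
  have d13 : g {1} ≠ g {3} := fun h => by have := hg2 _ m1 _ m3 h; simp at this
  have d23 : g {2} ≠ g {3} := fun h => by have := hg2 _ m2 _ m3 h; simp at this
  have hsub : ({g {1}, g {2}, g {3}} : Finset (Finset ℕ)) ⊆ σ.blocks := by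
    intro S hS
    simp only [Finset.mem_insert, Finset.mem_singleton] at hS
    rcases hS with rfl | rfl | rfl
    exacts [hg1 _ m1, hg1 _ m2, hg1 _ m3]
  have hcard : ({g {1}, g {2}, g {3}} : Finset (Finset ℕ)).card = 3 := by
    rw [Finset.card_insert_of_notMem (by simp [d12, d13]),
        Finset.card_insert_of_notMem (by simp [d23]), Finset.card_singleton]
  have := Finset.card_le_card hsub
  omega

lemma avoids13_2_of_intervals {n k : ℕ} (σ : SetPartition n) (hk : 1 ≤ k)
    (hb : σ.blocks = if k = n then {Finset.Icc 1 n}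
      else ({Finset.Icc 1 k, Finset.Icc (k + 1) n} : Finset (Finset ℕ))) :
    σ.Avoids pat13_2 := by
  rintro ⟨f, hf, g, hg1, hg2, hg3⟩
  have m13 : ({1, 3} : Finset ℕ) ∈ pat13_2.blocks := by decide
  have m2 : ({2} : Finset ℕ) ∈ pat13_2.blocks := by decide
  have dBC : g {1, 3} ≠ g {2} := fun h => absurd (hg2 _ m13 _ m2 h) (by decide)
  have hf1 : f 1 ∈ g {1, 3} := hg3 _ m13 1 (by decide)
  have hf3 : f 3 ∈ g {1, 3} := hg3 _ m13 3 (by decide)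
  have hf2 : f 2 ∈ g {2} := hg3 _ m2 2 (by decide)
  have h12 : f 1 < f 2 := hf (by simp) (by simp) (by norm_num)
  have h23 : f 2 < f 3 := hf (by simp) (by simp) (by norm_num)
  have hB := hg1 _ m13
  have hC := hg1 _ m2
  rw [hb] at hB hC
  by_cases hkn : k = n
  · rw [if_pos hkn] at hB hC
    simp only [Finset.mem_singleton] at hB hC
    exact dBC (hB.trans hC.symm)
  · rw [if_neg hkn] at hB hC
    simp only [Finset.mem_insert, Finset.mem_singleton] at hB hC
    rcases hB with hB | hB <;> rcases hC with hC | hC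
    · exact dBC (hB.trans hC.symm)
    · rw [hB] at hf3; rw [hC] at hf2
      simp only [Finset.mem_Icc] at hf3 hf2
      omega
    · rw [hB] at hf1; rw [hC] at hf2
      simp only [Finset.mem_Icc] at hf1 hf2
      omega
    · exact dBC (hB.trans hC.symm)

lemma case2 {n : ℕ} (σ : SetPartition n) (hA : σ.Avoids pat13_2) {B C : Finset ℕ}
    (hbl : σ.blocks = {B, C}) (hBC : B ≠ C) (h1B : 1 ∈ B) :
    ∃ k ∈ Finset.Icc 1 n, σ.blocks = if k = n then {Finset.Icc 1 n}
      else ({Finset.Icc 1 k, Finset.Icc (k + 1) n} : Finset (Finset ℕ)) := by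
  have hBm : B ∈ σ.blocks := by rw [hbl]; simp
  have hCm : C ∈ σ.blocks := by rw [hbl]; simp
  have hcov : B ∪ C = Finset.Icc 1 n := by
    have := σ.cover
    rw [hbl] at this
    simpa [Finset.sup_insert, Finset.sup_eq_union] using this
  have hdisj : Disjoint B C := σ.disj B hBm C hCm hBC
  have hBne : B.Nonempty := ⟨1, h1B⟩
  set k := B.max' hBne with hkdef
  have hkB : k ∈ B := B.max'_mem hBne
  have hk1 : 1 ≤ k := B.le_max' 1 h1B
  have hkn : k ≤ n := by
    have : k ∈ Finset.Icc 1 n := hcov ▸ Finset.mem_union_left C hkB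
    exact (Finset.mem_Icc.mp this).2
  have hBeq : B = Finset.Icc 1 k := by
    ext x
    simp only [Finset.mem_Icc]
    constructor
    · intro hx
      have hx' : x ∈ Finset.Icc 1 n := hcov ▸ Finset.mem_union_left C hx
      exact ⟨(Finset.mem_Icc.mp hx').1, B.le_max' x hx⟩
    · rintro ⟨hx1, hxk⟩
      by_contra hxB
      have hxC : x ∈ C := by
        have : x ∈ B ∪ C := hcov ▸ Finset.mem_Icc.mpr ⟨hx1, hxk.trans hkn⟩
        rcases Finset.mem_union.mp this with h | h
        · exact absurd h hxB
        · exact h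
      have hx1' : 1 < x := lt_of_le_of_ne hx1 (fun h => hxB (h ▸ h1B))
      have hxk' : x < k := lt_of_le_of_ne hxk (fun h => hxB (h ▸ hkB))
      exact hA (mk13_2 σ hx1' hxk' hBm hCm hBC h1B hxC hkB)
  have hCeq : C = Finset.Icc (k + 1) n := by
    ext x
    simp only [Finset.mem_Icc]
    constructor
    · intro hx
      have hx' : x ∈ Finset.Icc 1 n := hcov ▸ Finset.mem_union_right B hx
      have hxB : x ∉ B := Finset.disjoint_right.mp hdisj hx
      rw [hBeq] at hxB
      simp only [Finset.mem_Icc] at hxB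
      have := Finset.mem_Icc.mp hx'
      omega
    · rintro ⟨hx1, hxn⟩
      have : x ∈ B ∪ C := hcov ▸ Finset.mem_Icc.mpr ⟨by omega, hxn⟩
      rcases Finset.mem_union.mp this with h | h
      · rw [hBeq] at h; simp only [Finset.mem_Icc] at h; omega
      · exact h
  have hkltn : k < n := by
    obtain ⟨x, hx⟩ := σ.nonempty_mem C hCm
    rw [hCeq] at hx
    simp only [Finset.mem_Icc] at hx
    omega
  exact ⟨k, Finset.mem_Icc.mpr ⟨hk1, hkn⟩, by
    rw [if_neg (by omega), hbl, hBeq, hCeq]⟩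

lemma forward {n : ℕ} (hn : 1 ≤ n) (σ : SetPartition n)
    (h1 : σ.Avoids pat1_2_3) (h2 : σ.Avoids pat13_2) :
    ∃ k ∈ Finset.Icc 1 n, σ.blocks = if k = n then {Finset.Icc 1 n}
      else ({Finset.Icc 1 k, Finset.Icc (k + 1) n} : Finset (Finset ℕ)) := by
  have hbne : σ.blocks.Nonempty := by
    have h1mem : (1 : ℕ) ∈ σ.blocks.sup id := by
      rw [σ.cover]; simp [Finset.mem_Icc, hn]
    obtain ⟨B, hB, _⟩ := Finset.mem_sup.mp h1mem
    exact ⟨B, hB⟩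
  have hcard : σ.blocks.card ≤ 2 := by
    by_contra h
    push_neg at h
    obtain ⟨B, hB⟩ := hbne
    have e1 : (σ.blocks.erase B).card = σ.blocks.card - 1 := Finset.card_erase_of_mem hB
    obtain ⟨C, hC⟩ : (σ.blocks.erase B).Nonempty := Finset.card_pos.mp (by omega)
    have e2 : ((σ.blocks.erase B).erase C).card = (σ.blocks.erase B).card - 1 :=
      Finset.card_erase_of_mem hC
    obtain ⟨D, hD⟩ : ((σ.blocks.erase B).erase C).Nonempty := Finset.card_pos.mp (by omega)
    have hCB : C ≠ B := Finset.ne_of_mem_erase hC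
    have hDC : D ≠ C := Finset.ne_of_mem_erase hD
    have hDB : D ≠ B := Finset.ne_of_mem_erase (Finset.mem_of_mem_erase hD)
    exact h1 (contains123 σ hB (Finset.mem_of_mem_erase hC)
      (Finset.mem_of_mem_erase (Finset.mem_of_mem_erase hD))
      (Ne.symm hCB) (Ne.symm hDB) (Ne.symm hDC))
  interval_cases hc : σ.blocks.card
  · exact absurd (Finset.card_eq_zero.mp hc) hbne.ne_empty
  · obtain ⟨B, hB⟩ := Finset.card_eq_one.mp hc
    have : B = Finset.Icc 1 n := by
      have := σ.cover
      rw [hB] at this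
      simpa using this
    exact ⟨n, Finset.mem_Icc.mpr ⟨hn, le_rfl⟩, by rw [if_pos rfl, hB, this]⟩
  · obtain ⟨B, C, hBC, hbl⟩ := Finset.card_eq_two.mp hc
    have h1mem : (1 : ℕ) ∈ B ∪ C := by
      have hcov : B ∪ C = Finset.Icc 1 n := by
        have := σ.cover
        rw [hbl] at this
        simpa [Finset.sup_insert, Finset.sup_eq_union] using this
      rw [hcov]; simp [Finset.mem_Icc, hn]
    rcases Finset.mem_union.mp h1mem with h | h
    · exact case2 σ h2 hbl hBC h
    · exact case2 σ h2 (by rw [hbl]; exact Finset.pair_comm B C) hBC.symm h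

def part (n k : ℕ) (hn : 1 ≤ n) (hk : 1 ≤ k) (hkn : k ≤ n) : SetPartition n where
  blocks := if k = n then {Finset.Icc 1 n}
    else ({Finset.Icc 1 k, Finset.Icc (k + 1) n} : Finset (Finset ℕ))
  nonempty_mem := by
    intro B hB
    by_cases h : k = n
    · rw [if_pos h, Finset.mem_singleton] at hB
      subst hB
      exact ⟨1, Finset.mem_Icc.mpr ⟨le_rfl, hn⟩⟩
    · rw [if_neg h, Finset.mem_insert, Finset.mem_singleton] at hB
      rcases hB with rfl | rfl
      · exact ⟨1, Finset.mem_Icc.mpr ⟨le_rfl, hk⟩⟩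
      · exact ⟨k + 1, Finset.mem_Icc.mpr ⟨le_rfl, by omega⟩⟩
  disj := by
    intro B hB C hC hne
    by_cases h : k = n
    · rw [if_pos h, Finset.mem_singleton] at hB hC
      exact absurd (hB.trans hC.symm) hne
    · rw [if_neg h, Finset.mem_insert, Finset.mem_singleton] at hB hC
      rcases hB with rfl | rfl <;> rcases hC with rfl | rfl <;>
        first
        | exact absurd rfl hne
        | · rw [Finset.disjoint_left]
            intro x hx hx'
            simp only [Finset.mem_Icc] at hx hx'
            omega
  cover := by
    by_cases h : k = n
    · simp [h]
    · simp only [if_neg h, Finset.sup_insert, Finset.sup_singleton, id, Finset.sup_eq_union]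
      ext x
      simp only [Finset.mem_union, Finset.mem_Icc]
      have : k < n := lt_of_le_of_ne hkn h
      omega

lemma part_blocks (n k : ℕ) (hn : 1 ≤ n) (hk : 1 ≤ k) (hkn : k ≤ n) :
    (part n k hn hk hkn).blocks = if k = n then {Finset.Icc 1 n}
      else ({Finset.Icc 1 k, Finset.Icc (k + 1) n} : Finset (Finset ℕ)) := rfl

lemma blocks_inj {n k k' : ℕ} (hk : 1 ≤ k) (hkn : k ≤ n) (hk' : 1 ≤ k') (hk'n : k' ≤ n)
    (h : (if k = n then {Finset.Icc 1 n}
        else ({Finset.Icc 1 k, Finset.Icc (k + 1) n} : Finset (Finset ℕ)))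
      = (if k' = n then {Finset.Icc 1 n}
        else ({Finset.Icc 1 k', Finset.Icc (k' + 1) n} : Finset (Finset ℕ)))) : k = k' := by
  by_cases h1 : k = n <;> by_cases h2 : k' = n
  · omega
  · rw [if_pos h1, if_neg h2] at h
    have : Finset.Icc 1 k' ∈ ({Finset.Icc 1 n} : Finset (Finset ℕ)) := by
      rw [h]; exact Finset.mem_insert_self _ _
    rw [Finset.mem_singleton] at this
    have : n ∈ Finset.Icc 1 k' := this ▸ Finset.mem_Icc.mpr ⟨hk'.trans hk'n, le_rfl⟩
    rw [Finset.mem_Icc] at this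
    omega
  · rw [if_neg h1, if_pos h2] at h
    have : Finset.Icc 1 k ∈ ({Finset.Icc 1 n} : Finset (Finset ℕ)) := by
      rw [← h]; exact Finset.mem_insert_self _ _
    rw [Finset.mem_singleton] at this
    have : n ∈ Finset.Icc 1 k := this ▸ Finset.mem_Icc.mpr ⟨hk.trans hkn, le_rfl⟩
    rw [Finset.mem_Icc] at this
    omega
  · rw [if_neg h1, if_neg h2] at h
    have hm : Finset.Icc 1 k ∈ ({Finset.Icc 1 k', Finset.Icc (k' + 1) n} : Finset (Finset ℕ)) := by
      rw [← h]; exact Finset.mem_insert_self _ _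
    rw [Finset.mem_insert, Finset.mem_singleton] at hm
    rcases hm with hm | hm
    · have h1' : k ∈ Finset.Icc 1 k' := hm ▸ Finset.mem_Icc.mpr ⟨hk, le_rfl⟩
      have h2' : k' ∈ Finset.Icc 1 k := hm ▸ Finset.mem_Icc.mpr ⟨hk', le_rfl⟩
      rw [Finset.mem_Icc] at h1' h2'
      omega
    · have : (1 : ℕ) ∈ Finset.Icc (k' + 1) n := hm ▸ Finset.mem_Icc.mpr ⟨le_rfl, hk⟩
      rw [Finset.mem_Icc] at this
      omega


theorem stmt1 (n : ℕ) (hn : 1 ≤ n) :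
    (∀ σ : SetPartition n,
      (σ.Avoids pat1_2_3 ∧ σ.Avoids pat13_2) ↔
        ∃ k ∈ Finset.Icc 1 n,
          σ.blocks = if k = n then {Finset.Icc 1 n}
            else ({Finset.Icc 1 k, Finset.Icc (k + 1) n} : Finset (Finset ℕ))) ∧
    ({σ : SetPartition n | σ.Avoids pat1_2_3 ∧ σ.Avoids pat13_2}).ncard = n := by
  have hiff : ∀ σ : SetPartition n,
      (σ.Avoids pat1_2_3 ∧ σ.Avoids pat13_2) ↔
        ∃ k ∈ Finset.Icc 1 n,
          σ.blocks = if k = n then {Finset.Icc 1 n}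
            else ({Finset.Icc 1 k, Finset.Icc (k + 1) n} : Finset (Finset ℕ)) := by
    intro σ
    constructor
    · rintro ⟨h1, h2⟩
      exact forward hn σ h1 h2
    · rintro ⟨k, hk, hb⟩
      rw [Finset.mem_Icc] at hk
      refine ⟨avoids123_of_card_le_two σ ?_, avoids13_2_of_intervals σ hk.1 hb⟩
      rw [hb]
      split
      · simp
      · exact (Finset.card_insert_le _ _).trans (by simp)
  refine ⟨hiff, ?_⟩
  set F : ℕ → SetPartition n := fun k =>
    if h : 1 ≤ k ∧ k ≤ n then part n k hn h.1 h.2 else part n n hn hn le_rfl with hF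
  have hFblocks : ∀ k, 1 ≤ k → k ≤ n → (F k).blocks = if k = n then {Finset.Icc 1 n}
      else ({Finset.Icc 1 k, Finset.Icc (k + 1) n} : Finset (Finset ℕ)) := by
    intro k h1 h2
    rw [hF]
    simp only [dif_pos (And.intro h1 h2)]
    rfl
  have hset : {σ : SetPartition n | σ.Avoids pat1_2_3 ∧ σ.Avoids pat13_2}
      = F '' ↑(Finset.Icc 1 n) := by
    ext σ
    simp only [Set.mem_setOf_eq, hiff σ, Set.mem_image, Finset.mem_coe]
    constructor
    · rintro ⟨k, hk, hb⟩
      rw [Finset.mem_Icc] at hk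
      refine ⟨k, Finset.mem_Icc.mpr hk, ?_⟩
      exact (SetPartition.ext' ((hFblocks k hk.1 hk.2).trans hb.symm))
    · rintro ⟨k, hk, rfl⟩
      rw [Finset.mem_Icc] at hk
      exact ⟨k, Finset.mem_Icc.mpr hk, hFblocks k hk.1 hk.2⟩
  have hinj : Set.InjOn F ↑(Finset.Icc 1 n) := by
    intro a ha b hb hab
    rw [Finset.mem_coe, Finset.mem_Icc] at ha hb
    have : (F a).blocks = (F b).blocks := by rw [hab]
    rw [hFblocks a ha.1 ha.2, hFblocks b hb.1 hb.2] at this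
    exact blocks_inj ha.1 ha.2 hb.1 hb.2 this
  rw [hset, Set.ncard_image_of_injOn hinj, Set.ncard_coe_finset, Nat.card_Icc]
  omega
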